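/- arXiv:2510.16208 — 5 statements merged into one kernel-verified Lean document; each statement's English description precedes it below -/
import Mathlib

section
/- If A ∈ ℝ^{n×n} is a symmetric matrix with nonnegative diagonal entries, then a maximizer of the quadratic form z ↦ z^⊤ A z over the hypercube [−1,1]^n exists at a vertex; that is, max over z with ‖z‖_∞ ≤ 1 of z^⊤ A z equals max over s ∈ {−1,+1}^n of s^⊤ A s. -/
open Matrix

private lemma quadF (n : ℕ) (A : Matrix (Fin n) (Fin n) ℝ) (z : Fin n → ℝ) (k : Fin n) (t : ℝ) :
    (Function.update z k t) ⬝ᵥ A.mulVec (Function.update z k t)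
      = A k k * t^2
        + ((Function.update z k 0) ⬝ᵥ (fun i => A i k) + (A.mulVec (Function.update z k 0)) k) * t
        + (Function.update z k 0) ⬝ᵥ A.mulVec (Function.update z k 0) := by
  have h : Function.update z k t = Function.update z k 0 + t • (Pi.single k 1 : Fin n → ℝ) := by
    funext i
    by_cases hik : i = k
    · subst hik; simp
    · simp [Function.update_of_ne hik, hik]
  rw [h]
  simp [dotProduct_add, add_dotProduct, Matrix.mulVec_add, Matrix.mulVec_smul,
    dotProduct_smul, smul_dotProduct, mulVec_single, dotProduct_single, single_dotProduct,
    smul_eq_mul]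
  rw [show A.col k = fun i => A i k from rfl]
  ring

private lemma quad_le (a b c t : ℝ) (ha : 0 ≤ a) (ht : |t| ≤ 1) :
    a * t^2 + b * t + c ≤ max (a * 1^2 + b * 1 + c) (a * (-1)^2 + b * (-1) + c) := by
  have h1 : a * t^2 ≤ a := by
    have : t^2 ≤ 1 := by nlinarith [abs_nonneg t, sq_abs t]
    nlinarith
  have h2 : b * t ≤ |b| := by
    calc b * t ≤ |b * t| := le_abs_self _
    _ = |b| * |t| := abs_mul _ _
    _ ≤ |b| * 1 := by nlinarith [abs_nonneg b]
    _ = |b| := mul_one _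
  rcases abs_cases b with ⟨hb, _⟩ | ⟨hb, _⟩
  · apply le_max_of_le_left; nlinarith
  · apply le_max_of_le_right; nlinarith

private lemma roundVert (n : ℕ) (A : Matrix (Fin n) (Fin n) ℝ) (hdiag : ∀ i, 0 ≤ A i i)
    (k : ℕ) : ∀ z : Fin n → ℝ, (∀ i, |z i| ≤ 1) →
    ∃ s : Fin n → ℝ, (∀ i, |s i| ≤ 1) ∧ (∀ i : Fin n, (i : ℕ) < k → s i = 1 ∨ s i = -1) ∧
      z ⬝ᵥ A.mulVec z ≤ s ⬝ᵥ A.mulVec s := by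
  induction k with
  | zero => intro z hz; exact ⟨z, hz, fun i hi => absurd hi (by omega), le_refl _⟩
  | succ k ih =>
    intro z hz
    obtain ⟨s, hs1, hs2, hs3⟩ := ih z hz
    by_cases hk : k < n
    · set j : Fin n := ⟨k, hk⟩
      have hjs : s = Function.update s j (s j) := by simp
      set a := A j j
      set b := (Function.update s j 0) ⬝ᵥ (fun i => A i j) + (A.mulVec (Function.update s j 0)) j
      set c := (Function.update s j 0) ⬝ᵥ A.mulVec (Function.update s j 0)
      have hval : ∀ t : ℝ, (Function.update s j t) ⬝ᵥ A.mulVec (Function.update s j t)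
          = a * t^2 + b * t + c := fun t => quadF n A s j t
      have hle : s ⬝ᵥ A.mulVec s ≤ max (a * 1^2 + b * 1 + c) (a * (-1)^2 + b * (-1) + c) := by
        rw [hjs, hval (s j)]
        exact quad_le a b c (s j) (hdiag j) (hs1 j)
      by_cases hcase : a * (-1)^2 + b * (-1) + c ≤ a * 1^2 + b * 1 + c
      · refine ⟨Function.update s j 1, ?_, ?_, ?_⟩
        · intro i; by_cases h : i = j
          · subst h; simp
          · simp [Function.update_of_ne h]; exact hs1 i
        · intro i hi
          by_cases h : i = j
          · subst h; simp
          · have : (i : ℕ) < k := by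
              rcases Nat.lt_succ_iff_lt_or_eq.mp hi with h' | h'
              · exact h'
              · exact absurd (Fin.ext h' : i = j) h
            rw [Function.update_of_ne h]; exact hs2 i this
        · calc z ⬝ᵥ A.mulVec z ≤ s ⬝ᵥ A.mulVec s := hs3
            _ ≤ a * 1^2 + b * 1 + c := le_trans hle (max_le (le_refl _) hcase)
            _ = _ := (hval 1).symm
      · refine ⟨Function.update s j (-1), ?_, ?_, ?_⟩
        · intro i; by_cases h : i = j
          · subst h; simp
          · simp [Function.update_of_ne h]; exact hs1 i
        · intro i hi
          by_cases h : i = j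
          · subst h; simp
          · have : (i : ℕ) < k := by
              rcases Nat.lt_succ_iff_lt_or_eq.mp hi with h' | h'
              · exact h'
              · exact absurd (Fin.ext h' : i = j) h
            rw [Function.update_of_ne h]; exact hs2 i this
        · calc z ⬝ᵥ A.mulVec z ≤ s ⬝ᵥ A.mulVec s := hs3
            _ ≤ a * (-1)^2 + b * (-1) + c := le_trans hle (max_le (le_of_lt (not_le.mp hcase)) (le_refl _))
            _ = _ := (hval (-1)).symm
    · exact ⟨s, hs1, fun i _ => hs2 i (lt_of_lt_of_le i.isLt (not_lt.mp hk)), hs3⟩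

/-- if `A` is symmetric with nonnegative diagonal entries, then a maximizer of the
quadratic form `z ↦ zᵀ A z` over the hypercube `[-1,1]^n` exists at a vertex `s ∈ {-1,+1}^n`; in
particular the maximum over the cube equals the maximum over the vertices. -/
theorem stmt1 (n : ℕ) (A : Matrix (Fin n) (Fin n) ℝ)
    (hsym : A.IsSymm) (hdiag : ∀ i, 0 ≤ A i i) :
    (∃ s : Fin n → ℝ, (∀ i, s i = 1 ∨ s i = -1) ∧
      ∀ z : Fin n → ℝ, (∀ i, |z i| ≤ 1) → z ⬝ᵥ A.mulVec z ≤ s ⬝ᵥ A.mulVec s)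
    ∧ sSup {x : ℝ | ∃ z : Fin n → ℝ, (∀ i, |z i| ≤ 1) ∧ x = z ⬝ᵥ A.mulVec z}
      = sSup {x : ℝ | ∃ s : Fin n → ℝ, (∀ i, s i = 1 ∨ s i = -1) ∧ x = s ⬝ᵥ A.mulVec s} := by
  -- compactness: maximizer over the cube
  have hK : IsCompact {z : Fin n → ℝ | ∀ i, |z i| ≤ 1} := by
    have : {z : Fin n → ℝ | ∀ i, |z i| ≤ 1} = {z | ∀ i, z i ∈ Set.Icc (-1 : ℝ) 1} := by
      ext z; simp [abs_le, Set.mem_Icc]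
    rw [this]
    exact isCompact_pi_infinite fun i => isCompact_Icc
  have hne : ({z : Fin n → ℝ | ∀ i, |z i| ≤ 1}).Nonempty := ⟨0, fun i => by simp⟩
  have hcont : Continuous fun z : Fin n → ℝ => z ⬝ᵥ A.mulVec z := by
    simp only [dotProduct, Matrix.mulVec]
    fun_prop
  obtain ⟨zm, hzm, hmax⟩ := hK.exists_isMaxOn hne hcont.continuousOn
  obtain ⟨s, hs1, hs2, hs3⟩ := roundVert n A hdiag n zm hzm
  have hsv : ∀ i, s i = 1 ∨ s i = -1 := fun i => hs2 i i.isLt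
  have hdom : ∀ z : Fin n → ℝ, (∀ i, |z i| ≤ 1) → z ⬝ᵥ A.mulVec z ≤ s ⬝ᵥ A.mulVec s :=
    fun z hz => le_trans (hmax hz) hs3
  refine ⟨⟨s, hsv, hdom⟩, ?_⟩
  have hsc : ∀ i, |s i| ≤ 1 := fun i => by rcases hsv i with h | h <;> simp [h]
  have h1 : sSup {x : ℝ | ∃ z : Fin n → ℝ, (∀ i, |z i| ≤ 1) ∧ x = z ⬝ᵥ A.mulVec z}
      = s ⬝ᵥ A.mulVec s := by
    apply le_antisymm
    · refine csSup_le ⟨(0 : Fin n → ℝ) ⬝ᵥ A.mulVec 0, ⟨0, fun i => by simp, rfl⟩⟩ ?_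
      rintro x ⟨z, hz, rfl⟩; exact hdom z hz
    · exact le_csSup ⟨s ⬝ᵥ A.mulVec s, by rintro x ⟨z, hz, rfl⟩; exact hdom z hz⟩ ⟨s, hsc, rfl⟩
  have h2 : sSup {x : ℝ | ∃ s' : Fin n → ℝ, (∀ i, s' i = 1 ∨ s' i = -1) ∧ x = s' ⬝ᵥ A.mulVec s'}
      = s ⬝ᵥ A.mulVec s := by
    apply le_antisymm
    · refine csSup_le ⟨s ⬝ᵥ A.mulVec s, ⟨s, hsv, rfl⟩⟩ ?_
      rintro x ⟨s', hs', rfl⟩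
      exact hdom s' (fun i => by rcases hs' i with h | h <;> simp [h])
    · have hub : ∀ x ∈ {x : ℝ | ∃ s' : Fin n → ℝ, (∀ i, s' i = 1 ∨ s' i = -1) ∧ x = s' ⬝ᵥ A.mulVec s'}, x ≤ s ⬝ᵥ A.mulVec s := by
        rintro x ⟨s', hs', rfl⟩
        exact hdom s' (fun i => by rcases hs' i with h | h <;> simp [h])
      exact le_csSup ⟨_, hub⟩ ⟨s, hsv, rfl⟩
  rw [h1, h2]
end

section
/- Let A ∈ ℝ^{n×n} with spectral radius ρ(A) < 1, B ∈ ℝ^{n×p}, C ∈ ℝ^{p×n}, and let ρ ∈ (ρ(A), 1). Let φ = sup_{k ≥ 1} ‖A^k‖/ρ^k (which is finite), κ = max(‖B‖, ‖C‖) (spectral norms), α = 1 + φρ/(1−ρ), and β = φρ/(1−ρ)^2 + 1. Let T and H be integers with 0 ≤ H < T. Then ( max over u ∈ {−1,+1}^{p(T+1)} of u^⊤ S_T u ) − ( max over v ∈ {−1,+1}^{p(T−H)} of v^⊤ S_{T−H−1} v ) ≤ 2 p κ^2 (α H + β), where S_T and S_{T−H−1} are the block Toeplitz symmetrizations defined in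 the context. -/
open Matrix Filter
open scoped Matrix.Norms.L2Operator

/-- The spectral norm (operator ℓ2 norm) of a real matrix. -/
noncomputable def specNorm {m n : ℕ} (M : Matrix (Fin m) (Fin n) ℝ) : ℝ :=
  ‖LinearMap.toContinuousLinearMap (Matrix.toEuclideanLin M)‖

/-- The block Toeplitz matrix `M_N` whose `(i,j)`-th `p × p` block is `C * A^(j-i-1) * B`
when `i < j` and `0` otherwise (0-based block indices). -/
noncomputable def Mblock (n p : ℕ) (A : Matrix (Fin n) (Fin n) ℝ)
    (B : Matrix (Fin n) (Fin p) ℝ) (C : Matrix (Fin p) (Fin n) ℝ) (N : ℕ) :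
    Matrix (Fin (N + 1) × Fin p) (Fin (N + 1) × Fin p) ℝ :=
  fun q r => if q.1.1 < r.1.1 then (C * A ^ (r.1.1 - q.1.1 - 1) * B) q.2 r.2 else 0

/-- `S_N = M_N + M_Nᵀ`. -/
noncomputable def Sblock (n p : ℕ) (A : Matrix (Fin n) (Fin n) ℝ)
    (B : Matrix (Fin n) (Fin p) ℝ) (C : Matrix (Fin p) (Fin n) ℝ) (N : ℕ) :
    Matrix (Fin (N + 1) × Fin p) (Fin (N + 1) × Fin p) ℝ :=
  Mblock n p A B C N + (Mblock n p A B C N)ᵀ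

lemma specNorm_eq_l2 {m n : ℕ} (M : Matrix (Fin m) (Fin n) ℝ) : specNorm M = ‖M‖ := rfl

lemma specNorm_mul_le {m n l : ℕ} (M : Matrix (Fin m) (Fin n) ℝ) (N : Matrix (Fin n) (Fin l) ℝ) :
    specNorm (M * N) ≤ specNorm M * specNorm N := Matrix.l2_opNorm_mul M N

lemma specNorm_nonneg {m n : ℕ} (M : Matrix (Fin m) (Fin n) ℝ) : 0 ≤ specNorm M := norm_nonneg _

lemma specNorm_le_map {m n : ℕ} (M : Matrix (Fin m) (Fin n) ℝ) :
    specNorm M ≤ ‖M.map (algebraMap ℝ ℂ)‖ := by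
  apply ContinuousLinearMap.opNorm_le_bound _ (norm_nonneg _)
  intro v
  set w : EuclideanSpace ℂ (Fin n) := (EuclideanSpace.equiv (Fin n) ℂ).symm (fun i => (v i : ℂ)) with hwdef
  have hw : ‖w‖ = ‖v‖ := by
    rw [EuclideanSpace.norm_eq, EuclideanSpace.norm_eq]
    congr 1
    apply Finset.sum_congr rfl
    intro i _
    simp [hwdef]
  have hmv : ∀ i, ((M.map (algebraMap ℝ ℂ)) *ᵥ (fun i => (v i : ℂ))) i = ((M *ᵥ (fun j => v j)) i : ℂ) := by
    intro i
    simp [Matrix.mulVec, dotProduct, Matrix.map_apply, Complex.ofReal_sum]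
  have key : ‖(toEuclideanLin (M.map (algebraMap ℝ ℂ))) w‖ =
      ‖(LinearMap.toContinuousLinearMap (Matrix.toEuclideanLin M)) v‖ := by
    rw [show ((LinearMap.toContinuousLinearMap (Matrix.toEuclideanLin M)) v : EuclideanSpace ℝ (Fin m)) = (toEuclideanLin M) v from rfl]
    rw [EuclideanSpace.norm_eq, EuclideanSpace.norm_eq]
    congr 1
    apply Finset.sum_congr rfl
    intro i _
    rw [toEuclideanLin_apply, toEuclideanLin_apply]
    show ‖((M.map (algebraMap ℝ ℂ)) *ᵥ (fun i => (v i : ℂ))) i‖ ^ 2 = ‖(M *ᵥ (fun j => v j)) i‖ ^ 2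
    rw [hmv i]
    simp
  calc ‖(LinearMap.toContinuousLinearMap (Matrix.toEuclideanLin M)) v‖
      = ‖(toEuclideanLin (M.map (algebraMap ℝ ℂ))) w‖ := key.symm
    _ ≤ ‖M.map (algebraMap ℝ ℂ)‖ * ‖w‖ := by
        have := Matrix.l2_opNorm_mulVec (M.map (algebraMap ℝ ℂ)) w
        rw [toEuclideanLin_apply]
        exact this
    _ = ‖M.map (algebraMap ℝ ℂ)‖ * ‖v‖ := by rw [hw]

lemma bddAbove_specNorm_pow {n : ℕ} (A : Matrix (Fin n) (Fin n) ℝ) (ρ : ℝ) (hρ0 : 0 < ρ)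
    (hρA : spectralRadius ℂ (A.map (algebraMap ℝ ℂ)) < ENNReal.ofReal ρ) :
    BddAbove (Set.range fun k : ℕ => specNorm (A ^ (k + 1)) / ρ ^ (k + 1)) := by
  set a := A.map (algebraMap ℝ ℂ) with ha
  have hmap : ∀ j : ℕ, a ^ j = (A ^ j).map (algebraMap ℝ ℂ) := by
    intro j
    rw [ha, ← RingHom.mapMatrix_apply, ← map_pow, RingHom.mapMatrix_apply]
  have htend := spectrum.pow_nnnorm_pow_one_div_tendsto_nhds_spectralRadius a
  have hev : ∀ᶠ k : ℕ in atTop, ((‖a ^ k‖₊ : ENNReal) ^ (1 / (k:ℝ))) < ENNReal.ofReal ρ :=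
    htend.eventually_lt_const hρA
  obtain ⟨N, hN⟩ := eventually_atTop.mp hev
  have hnorm : ∀ k : ℕ, N ≤ k → 1 ≤ k → ‖a ^ k‖ ≤ ρ ^ k := by
    intro k hk hk1
    have h1 := hN k hk
    have hkne : (k : ℝ) ≠ 0 := by positivity
    have h2 : ((‖a ^ k‖₊ : ENNReal) ^ (1 / (k:ℝ))) ^ (k:ℝ) < (ENNReal.ofReal ρ) ^ (k:ℝ) :=
      ENNReal.rpow_lt_rpow h1 (by positivity)
    rw [← ENNReal.rpow_mul, one_div, inv_mul_cancel₀ hkne, ENNReal.rpow_one] at h2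
    rw [ENNReal.ofReal_rpow_of_pos hρ0, Real.rpow_natCast] at h2
    have h3 : (‖a ^ k‖₊ : ℝ) ≤ ρ ^ k := by
      have := (ENNReal.lt_ofReal_iff_toReal_lt (by simp)).mp h2
      simpa using this.le
    simpa using h3
  set f : ℕ → ℝ := fun k => specNorm (A ^ (k + 1)) / ρ ^ (k + 1) with hf
  have hf0 : ∀ k, 0 ≤ f k := by
    intro k
    apply div_nonneg (norm_nonneg _) (by positivity)
  refine ⟨(∑ j ∈ Finset.range (N + 1), f j) + 1, ?_⟩
  rintro x ⟨k, rfl⟩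
  by_cases hk : k < N
  · have h1 : f k ≤ ∑ j ∈ Finset.range (N + 1), f j :=
      Finset.single_le_sum (fun j _ => hf0 j) (Finset.mem_range.mpr (by omega))
    linarith
  · have h1 : ‖a ^ (k+1)‖ ≤ ρ ^ (k+1) := hnorm (k+1) (by omega) (by omega)
    have h2 : specNorm (A ^ (k+1)) ≤ ρ ^ (k+1) := by
      calc specNorm (A ^ (k+1)) ≤ ‖(A ^ (k+1)).map (algebraMap ℝ ℂ)‖ := specNorm_le_map _
        _ = ‖a ^ (k+1)‖ := by rw [hmap]
        _ ≤ ρ ^ (k+1) := h1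
    have h3 : f k ≤ 1 := by
      rw [hf]
      exact div_le_one_of_le₀ h2 (by positivity)
    have h4 : 0 ≤ ∑ j ∈ Finset.range (N + 1), f j := Finset.sum_nonneg fun j _ => hf0 j
    linarith

lemma sign_dot_mulVec_le {p : ℕ} (M : Matrix (Fin p) (Fin p) ℝ) (x y : Fin p → ℝ)
    (hx : ∀ a, x a = 1 ∨ x a = -1) (hy : ∀ b, y b = 1 ∨ y b = -1) :
    x ⬝ᵥ M.mulVec y ≤ specNorm M * p := by
  set x' : EuclideanSpace ℝ (Fin p) := (EuclideanSpace.equiv (Fin p) ℝ).symm x with hx'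
  set y' : EuclideanSpace ℝ (Fin p) := (EuclideanSpace.equiv (Fin p) ℝ).symm y with hy'
  have hnx : ‖x'‖ = Real.sqrt p := by
    rw [EuclideanSpace.norm_eq]
    congr 1
    rw [show ∑ i : Fin p, ‖x' i‖ ^ 2 = ∑ i : Fin p, 1 from Finset.sum_congr rfl fun i _ => by
      rcases hx i with h | h <;> simp [hx', h]]
    simp
  have hny : ‖y'‖ = Real.sqrt p := by
    rw [EuclideanSpace.norm_eq]
    congr 1
    rw [show ∑ i : Fin p, ‖y' i‖ ^ 2 = ∑ i : Fin p, 1 from Finset.sum_congr rfl fun i _ => by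
      rcases hy i with h | h <;> simp [hy', h]]
    simp
  have hinner : x ⬝ᵥ M.mulVec y = inner ℝ x' ((toEuclideanLin M) y') := by
    rw [toEuclideanLin_apply]
    simp only [PiLp.inner_apply, RCLike.inner_apply]
    simp [dotProduct, hx', hy', mul_comm]
  rw [hinner]
  calc inner ℝ x' ((toEuclideanLin M) y')
      ≤ ‖x'‖ * ‖(toEuclideanLin M) y'‖ := real_inner_le_norm _ _
    _ ≤ ‖x'‖ * (specNorm M * ‖y'‖) := by
        apply mul_le_mul_of_nonneg_left _ (norm_nonneg _)
        exact (LinearMap.toContinuousLinearMap (Matrix.toEuclideanLin M)).le_opNorm y'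
    _ = specNorm M * (Real.sqrt p * Real.sqrt p) := by rw [hnx, hny]; ring
    _ = specNorm M * p := by rw [Real.mul_self_sqrt (by positivity)]

lemma sign_quad_le_sum_abs {ι : Type*} [Fintype ι] (W : Matrix ι ι ℝ) (u : ι → ℝ)
    (hu : ∀ q, u q = 1 ∨ u q = -1) :
    u ⬝ᵥ W.mulVec u ≤ ∑ q, ∑ r, |W q r| := by
  rw [dotProduct]
  apply Finset.sum_le_sum
  intro q _
  rw [mulVec, dotProduct, Finset.mul_sum]
  apply Finset.sum_le_sum
  intro r _
  calc u q * (W q r * u r) ≤ |u q * (W q r * u r)| := le_abs_self _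
    _ = |u q| * |W q r| * |u r| := by rw [abs_mul, abs_mul]; ring
    _ = |W q r| := by rcases hu q with h | h <;> rcases hu r with h' | h' <;> simp [h, h']

lemma quad_symmetrize {ι : Type*} [Fintype ι] (W : Matrix ι ι ℝ) (u : ι → ℝ) :
    u ⬝ᵥ (W + Wᵀ).mulVec u = 2 * (u ⬝ᵥ W.mulVec u) := by
  rw [add_mulVec, dotProduct_add, two_mul]
  congr 1
  rw [Matrix.dotProduct_mulVec, Matrix.vecMul_transpose, dotProduct_comm]

lemma core (n p : ℕ) (A : Matrix (Fin n) (Fin n) ℝ) (B : Matrix (Fin n) (Fin p) ℝ)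
    (C : Matrix (Fin p) (Fin n) ℝ) (φ ρ κ : ℝ)
    (hρ0 : 0 < ρ) (hρ1 : ρ < 1) (hφ0 : 0 ≤ φ) (hκ0 : 0 ≤ κ)
    (hAk : ∀ k : ℕ, specNorm (A ^ (k + 1)) ≤ φ * ρ ^ (k + 1))
    (hB : specNorm B ≤ κ) (hC : specNorm C ≤ κ)
    {N₂ N₁ : ℕ} (hN : N₂ < N₁) (u : Fin (N₁ + 1) × Fin p → ℝ)
    (hu : ∀ q, u q = 1 ∨ u q = -1) :
    u ⬝ᵥ (Mblock n p A B C N₁).mulVec u ≤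
      (fun q : Fin (N₂ + 1) × Fin p => u (Fin.castLE (by omega) q.1, q.2)) ⬝ᵥ
        (Mblock n p A B C N₂).mulVec (fun q => u (Fin.castLE (by omega) q.1, q.2))
      + ((N₁ - N₂ : ℕ) : ℝ) * (p * (κ ^ 2 * (1 + φ * ρ / (1 - ρ)))) := by
  have hle : N₂ + 1 ≤ N₁ + 1 := by omega
  set v : Fin (N₂ + 1) × Fin p → ℝ := fun q => u (Fin.castLE hle q.1, q.2) with hv
  have h1ρ : 0 < 1 - ρ := by linarith
  set E : ℝ := p * (κ ^ 2 * (1 + φ * ρ / (1 - ρ))) with hE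
  -- expansion
  have hexpand : ∀ {m : ℕ} (W : Matrix (Fin (m+1) × Fin p) (Fin (m+1) × Fin p) ℝ)
      (w : Fin (m+1) × Fin p → ℝ),
      w ⬝ᵥ W.mulVec w = ∑ j : Fin (m+1), ∑ i : Fin (m+1),
        ∑ a : Fin p, ∑ b : Fin p, w (i, a) * W (i, a) (j, b) * w (j, b) := by
    intro m W w
    rw [← Finset.sum_comm]
    simp only [dotProduct, mulVec, Fintype.sum_prod_type, Finset.mul_sum, mul_assoc]
    exact Finset.sum_congr rfl fun i _ => Finset.sum_comm
  set t : Fin (N₁+1) → Fin (N₁+1) → ℝ := fun i j =>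
    ∑ a : Fin p, ∑ b : Fin p, u (i, a) * Mblock n p A B C N₁ (i, a) (j, b) * u (j, b) with ht
  rw [hexpand]
  -- the geometric bound per row
  set c : ℕ → ℝ := fun k => if k = 0 then 1 else φ * ρ ^ k with hc
  have hc0 : ∀ k, 0 ≤ c k := by
    intro k
    rw [hc]
    dsimp only
    split
    · norm_num
    · positivity
  have hgeom : ∀ J : ℕ, ∑ k ∈ Finset.range J, c k ≤ 1 + φ * ρ / (1 - ρ) := by
    have hfrac : 0 ≤ φ * ρ / (1 - ρ) := div_nonneg (by positivity) h1ρ.le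
    intro J
    cases J with
    | zero => simp; linarith
    | succ d =>
      rw [Finset.sum_range_succ']
      have hcsucc : ∀ i : ℕ, c (i + 1) = φ * ρ ^ (i+1) := by
        intro i; rw [hc]; simp
      have hc0' : c 0 = 1 := by rw [hc]; simp
      rw [hc0']
      have hsum : ∑ i ∈ Finset.range d, c (i + 1) = (∑ i ∈ Finset.range d, ρ ^ i) * (φ * ρ) := by
        rw [Finset.sum_mul]
        exact Finset.sum_congr rfl fun i _ => by rw [hcsucc]; ring
      rw [hsum]
      have hgs : (∑ i ∈ Finset.range d, ρ ^ i) ≤ 1 / (1 - ρ) := by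
        rw [geom_sum_eq (by linarith : ρ ≠ 1)]
        rw [show (ρ ^ d - 1) / (ρ - 1) = (1 - ρ ^ d) / (1 - ρ) by
          rw [div_eq_div_iff (by linarith) (by linarith)]; ring]
        gcongr
        nlinarith [pow_nonneg hρ0.le d]
      have : (∑ i ∈ Finset.range d, ρ ^ i) * (φ * ρ) ≤ (1 / (1 - ρ)) * (φ * ρ) :=
        mul_le_mul_of_nonneg_right hgs (by positivity)
      calc (∑ i ∈ Finset.range d, ρ ^ i) * (φ * ρ) + 1
          ≤ (1 / (1 - ρ)) * (φ * ρ) + 1 := by linarith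
        _ = 1 + φ * ρ / (1 - ρ) := by ring
  -- per-pair bound
  have hblock : ∀ k : ℕ, specNorm (C * A ^ k * B) ≤ κ ^ 2 * c k := by
    intro k
    cases k with
    | zero =>
      have heq : C * A ^ 0 * B = C * B := by rw [pow_zero, Matrix.mul_one]
      have h1 : specNorm (C * B) ≤ specNorm C * specNorm B := specNorm_mul_le _ _
      have h2 : specNorm C * specNorm B ≤ κ * κ :=
        mul_le_mul hC hB (specNorm_nonneg _) hκ0
      have hc0v : c 0 = 1 := by rw [hc]; simp
      rw [hc0v, heq]
      calc specNorm (C * B) ≤ κ * κ := h1.trans h2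
        _ = κ ^ 2 * 1 := by ring
    | succ m =>
      have hcv : c (m+1) = φ * ρ ^ (m+1) := by rw [hc]; simp
      have h1 : specNorm (C * A ^ (m+1) * B) ≤ specNorm (C * A ^ (m+1)) * specNorm B :=
        specNorm_mul_le _ _
      have h2 : specNorm (C * A ^ (m+1)) ≤ specNorm C * specNorm (A ^ (m+1)) :=
        specNorm_mul_le _ _
      have h3 : specNorm (A ^ (m+1)) ≤ φ * ρ ^ (m+1) := hAk m
      have h4 : specNorm (C * A ^ (m+1)) ≤ κ * (φ * ρ ^ (m+1)) :=
        h2.trans (mul_le_mul hC h3 (specNorm_nonneg _) hκ0)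
      have h5 : specNorm (C * A ^ (m+1)) * specNorm B ≤ (κ * (φ * ρ ^ (m+1))) * κ :=
        mul_le_mul h4 hB (specNorm_nonneg _) (by positivity)
      rw [hcv]
      calc specNorm (C * A ^ (m+1) * B) ≤ (κ * (φ * ρ ^ (m+1))) * κ := h1.trans h5
        _ = κ ^ 2 * (φ * ρ ^ (m+1)) := by ring
  have hpair : ∀ i j : Fin (N₁+1), t i j ≤
      if i.1 < j.1 then p * (κ ^ 2 * c (j.1 - i.1 - 1)) else 0 := by
    intro i j
    by_cases h : i.1 < j.1
    · rw [if_pos h]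
      have htij : t i j = (fun a => u (i, a)) ⬝ᵥ
          (C * A ^ (j.1 - i.1 - 1) * B).mulVec (fun b => u (j, b)) := by
        rw [ht]
        simp only [dotProduct, mulVec, Finset.mul_sum, mul_assoc, Mblock, if_pos h]
      have hsn := hblock (j.1 - i.1 - 1)
      have hsign := sign_dot_mulVec_le (C * A ^ (j.1 - i.1 - 1) * B)
        (fun a => u (i, a)) (fun b => u (j, b)) (fun a => hu (i, a)) (fun b => hu (j, b))
      rw [htij]
      calc (fun a => u (i, a)) ⬝ᵥ (C * A ^ (j.1 - i.1 - 1) * B).mulVec (fun b => u (j, b))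
          ≤ specNorm (C * A ^ (j.1 - i.1 - 1) * B) * p := hsign
        _ ≤ (κ ^ 2 * c (j.1 - i.1 - 1)) * p := mul_le_mul_of_nonneg_right hsn (by positivity)
        _ = p * (κ ^ 2 * c (j.1 - i.1 - 1)) := by ring
    · rw [if_neg h]
      rw [ht]
      simp only [Mblock, if_neg h]
      simp
  -- per-row bound
  have hrow : ∀ j : Fin (N₁+1), (∑ i : Fin (N₁+1), t i j) ≤ E := by
    intro j
    have h1 : (∑ i : Fin (N₁+1), t i j) ≤
        ∑ i : Fin (N₁+1), (if i.1 < j.1 then p * (κ ^ 2 * c (j.1 - i.1 - 1)) else 0) :=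
      Finset.sum_le_sum fun i _ => hpair i j
    have h2 : ∑ i : Fin (N₁+1), (if i.1 < j.1 then p * (κ ^ 2 * c (j.1 - i.1 - 1)) else 0)
        = ∑ m ∈ Finset.range (N₁+1), (if m < j.1 then p * (κ ^ 2 * c (j.1 - m - 1)) else 0) :=
      Fin.sum_univ_eq_sum_range
        (fun m => if m < j.1 then (p : ℝ) * (κ ^ 2 * c (j.1 - m - 1)) else 0) (N₁+1)
    have h3 : ∑ m ∈ Finset.range (N₁+1), (if m < j.1 then p * (κ ^ 2 * c (j.1 - m - 1)) else 0)
        = ∑ m ∈ Finset.range j.1, p * (κ ^ 2 * c (j.1 - m - 1)) := by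
      rw [← Finset.sum_subset (Finset.range_subset_range.mpr j.isLt.le)]
      · exact Finset.sum_congr rfl fun m hm => if_pos (Finset.mem_range.mp hm)
      · intro m _ hm
        rw [if_neg (by simpa using hm)]
    have h4 : ∑ m ∈ Finset.range j.1, (p:ℝ) * (κ ^ 2 * c (j.1 - m - 1))
        = p * (κ ^ 2 * ∑ m ∈ Finset.range j.1, c m) := by
      have e1 : ∑ m ∈ Finset.range j.1, (p:ℝ) * (κ ^ 2 * c (j.1 - m - 1))
          = ∑ m ∈ Finset.range j.1, (p:ℝ) * (κ ^ 2 * c (j.1 - 1 - m)) :=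
        Finset.sum_congr rfl fun m hm => by rw [Nat.sub_right_comm]
      rw [e1, Finset.sum_range_reflect (fun k => (p:ℝ) * (κ ^ 2 * c k)) j.1]
      simp [Finset.mul_sum]
    have h5 : p * (κ ^ 2 * ∑ m ∈ Finset.range j.1, c m) ≤ E := by
      rw [hE]
      exact mul_le_mul_of_nonneg_left
        (mul_le_mul_of_nonneg_left (hgeom j.1) (by positivity)) (by positivity)
    calc (∑ i : Fin (N₁+1), t i j) ≤ _ := h1
      _ = _ := h2
      _ = _ := h3
      _ = _ := h4
      _ ≤ E := h5
  have hLHS : (∑ j : Fin (N₁+1), ∑ i : Fin (N₁+1), ∑ a : Fin p, ∑ b : Fin p,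
      u (i, a) * Mblock n p A B C N₁ (i, a) (j, b) * u (j, b)) = ∑ j, ∑ i, t i j := rfl
  rw [hLHS]
  have hPmap : Finset.univ.filter (fun j : Fin (N₁+1) => j.1 ≤ N₂)
      = Finset.map (Fin.castLEEmb hle) Finset.univ := by
    ext j
    simp only [Finset.mem_filter, Finset.mem_univ, true_and, Finset.mem_map]
    constructor
    · intro hj
      refine ⟨⟨j.1, by omega⟩, ?_⟩
      ext
      simp [Fin.castLEEmb]
    · rintro ⟨i, rfl⟩
      have : (Fin.castLEEmb hle i).1 = i.1 := rfl
      rw [this]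
      omega
  have hzero : ∀ (i j : Fin (N₁+1)), j.1 ≤ N₂ → ¬ i.1 ≤ N₂ → t i j = 0 := by
    intro i j hj hi
    rw [ht]
    dsimp only
    have hij : ¬ i.1 < j.1 := by omega
    simp [Mblock, hij]
  have hinner : ∀ j ∈ Finset.univ.filter (fun j : Fin (N₁+1) => j.1 ≤ N₂),
      (∑ i, t i j) = ∑ i ∈ Finset.univ.filter (fun i : Fin (N₁+1) => i.1 ≤ N₂), t i j := by
    intro j hj
    rw [Finset.mem_filter] at hj
    symm
    apply Finset.sum_subset (Finset.filter_subset _ _)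
    intro i _ hi
    simp only [Finset.mem_filter, Finset.mem_univ, true_and] at hi
    exact hzero i j hj.2 hi
  have hpart1 : (∑ j ∈ Finset.univ.filter (fun j : Fin (N₁+1) => j.1 ≤ N₂),
      ∑ i ∈ Finset.univ.filter (fun i : Fin (N₁+1) => i.1 ≤ N₂), t i j)
      = v ⬝ᵥ (Mblock n p A B C N₂).mulVec v := by
    rw [hexpand (Mblock n p A B C N₂) v, hPmap, Finset.sum_map]
    refine Finset.sum_congr rfl fun j' _ => ?_
    rw [Finset.sum_map]
    refine Finset.sum_congr rfl fun i' _ => rfl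
  have hextra : (∑ j ∈ Finset.univ.filter (fun j : Fin (N₁+1) => ¬ j.1 ≤ N₂),
      ∑ i : Fin (N₁+1), t i j) ≤ ((N₁ - N₂ : ℕ) : ℝ) * E := by
    have hcard : (Finset.univ.filter (fun j : Fin (N₁+1) => ¬ j.1 ≤ N₂)).card = N₁ - N₂ := by
      rw [Finset.filter_not, Finset.card_sdiff_of_subset (Finset.filter_subset _ _), hPmap,
        Finset.card_map, Finset.card_univ, Finset.card_univ]
      simp only [Fintype.card_fin]
      omega
    calc (∑ j ∈ Finset.univ.filter (fun j : Fin (N₁+1) => ¬ j.1 ≤ N₂), ∑ i : Fin (N₁+1), t i j)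
        ≤ (Finset.univ.filter (fun j : Fin (N₁+1) => ¬ j.1 ≤ N₂)).card • E :=
          Finset.sum_le_card_nsmul _ _ E (fun j _ => hrow j)
      _ = ((N₁ - N₂ : ℕ) : ℝ) * E := by rw [hcard, nsmul_eq_mul]
  calc (∑ j : Fin (N₁+1), ∑ i : Fin (N₁+1), t i j)
      = (∑ j ∈ Finset.univ.filter (fun j : Fin (N₁+1) => j.1 ≤ N₂), ∑ i : Fin (N₁+1), t i j)
        + ∑ j ∈ Finset.univ.filter (fun j : Fin (N₁+1) => ¬ j.1 ≤ N₂), ∑ i : Fin (N₁+1), t i j :=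
        (Finset.sum_filter_add_sum_filter_not Finset.univ _ _).symm
    _ = (∑ j ∈ Finset.univ.filter (fun j : Fin (N₁+1) => j.1 ≤ N₂),
          ∑ i ∈ Finset.univ.filter (fun i : Fin (N₁+1) => i.1 ≤ N₂), t i j)
        + ∑ j ∈ Finset.univ.filter (fun j : Fin (N₁+1) => ¬ j.1 ≤ N₂), ∑ i : Fin (N₁+1), t i j := by
        rw [Finset.sum_congr rfl hinner]
    _ = v ⬝ᵥ (Mblock n p A B C N₂).mulVec v
        + ∑ j ∈ Finset.univ.filter (fun j : Fin (N₁+1) => ¬ j.1 ≤ N₂), ∑ i : Fin (N₁+1), t i j := by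
        rw [hpart1]
    _ ≤ v ⬝ᵥ (Mblock n p A B C N₂).mulVec v + ((N₁ - N₂ : ℕ) : ℝ) * E :=
        add_le_add_right hextra _


/-- with `ρ(A) < ρ < 1`, `φ = sup_{k ≥ 1} ‖A^k‖/ρ^k`, `κ = max(‖B‖,‖C‖)`,
`α = 1 + φρ/(1-ρ)`, `β = φρ/(1-ρ)² + 1`, and `0 ≤ H < T`,
`max_{u ∈ {±1}^{p(T+1)}} uᵀ S_T u − max_{v ∈ {±1}^{p(T-H)}} vᵀ S_{T-H-1} v ≤ 2pκ²(αH + β)`. -/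
theorem stmt2 (n p T H : ℕ) (hH : H < T)
    (A : Matrix (Fin n) (Fin n) ℝ) (B : Matrix (Fin n) (Fin p) ℝ)
    (C : Matrix (Fin p) (Fin n) ℝ)
    (hA : spectralRadius ℂ (A.map (algebraMap ℝ ℂ)) < 1)
    (ρ : ℝ)
    (hρA : spectralRadius ℂ (A.map (algebraMap ℝ ℂ)) < ENNReal.ofReal ρ)
    (hρ1 : ρ < 1)
    (φ κ α β : ℝ)
    (hφ : φ = ⨆ k : ℕ, specNorm (A ^ (k + 1)) / ρ ^ (k + 1))
    (hκ : κ = max (specNorm B) (specNorm C))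
    (hα : α = 1 + φ * ρ / (1 - ρ))
    (hβ : β = φ * ρ / (1 - ρ) ^ 2 + 1) :
    sSup {x : ℝ | ∃ u : Fin (T + 1) × Fin p → ℝ, (∀ q, u q = 1 ∨ u q = -1) ∧
          x = u ⬝ᵥ (Sblock n p A B C T).mulVec u}
      - sSup {x : ℝ | ∃ u : Fin (T - H - 1 + 1) × Fin p → ℝ, (∀ q, u q = 1 ∨ u q = -1) ∧
          x = u ⬝ᵥ (Sblock n p A B C (T - H - 1)).mulVec u}
      ≤ 2 * p * κ ^ 2 * (α * H + β) := by
  have hρ0 : 0 < ρ := by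
    have h1 : 0 < ENNReal.ofReal ρ := lt_of_le_of_lt zero_le hρA
    exact ENNReal.ofReal_pos.mp h1
  have h1ρ : 0 < 1 - ρ := by linarith
  have hbdd := bddAbove_specNorm_pow A ρ hρ0 hρA
  have hAk : ∀ k : ℕ, specNorm (A ^ (k + 1)) ≤ φ * ρ ^ (k + 1) := by
    intro k
    have h1 : specNorm (A ^ (k + 1)) / ρ ^ (k + 1) ≤ φ := hφ ▸ le_ciSup hbdd k
    exact (div_le_iff₀ (pow_pos hρ0 _)).mp h1 |>.trans_eq (by ring)
  have hφ0 : 0 ≤ φ := by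
    have h1 : specNorm (A ^ 1) / ρ ^ 1 ≤ φ := hφ ▸ le_ciSup hbdd 0
    have h2 : 0 ≤ specNorm (A ^ 1) / ρ ^ 1 := div_nonneg (specNorm_nonneg _) (by positivity)
    linarith
  have hB : specNorm B ≤ κ := hκ ▸ le_max_left _ _
  have hC : specNorm C ≤ κ := hκ ▸ le_max_right _ _
  have hκ0 : 0 ≤ κ := (specNorm_nonneg B).trans hB
  set S₂ := Sblock n p A B C (T - H - 1) with hS₂
  set set₂ := {x : ℝ | ∃ u : Fin (T - H - 1 + 1) × Fin p → ℝ, (∀ q, u q = 1 ∨ u q = -1) ∧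
      x = u ⬝ᵥ S₂.mulVec u} with hset₂
  have hbdd₂ : BddAbove set₂ := by
    refine ⟨∑ q, ∑ r, |S₂ q r|, ?_⟩
    rintro x ⟨u, hu, rfl⟩
    exact sign_quad_le_sum_abs S₂ u hu
  rw [sub_le_iff_le_add]
  have hne : {x : ℝ | ∃ u : Fin (T + 1) × Fin p → ℝ, (∀ q, u q = 1 ∨ u q = -1) ∧
      x = u ⬝ᵥ (Sblock n p A B C T).mulVec u}.Nonempty :=
    ⟨(fun _ => 1) ⬝ᵥ (Sblock n p A B C T).mulVec (fun _ => 1),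
      (fun _ => (1:ℝ)), fun q => Or.inl rfl, rfl⟩
  apply csSup_le hne
  rintro x ⟨u, hu, rfl⟩
  have hN : T - H - 1 < T := by omega
  have hcore := core n p A B C φ ρ κ hρ0 hρ1 hφ0 hκ0 hAk hB hC hN u hu
  set v : Fin (T - H - 1 + 1) × Fin p → ℝ :=
    fun q => u (Fin.castLE (by omega) q.1, q.2) with hv
  have hmem : v ⬝ᵥ S₂.mulVec v ∈ set₂ := ⟨v, fun q => hu _, rfl⟩
  have hle2 : v ⬝ᵥ S₂.mulVec v ≤ sSup set₂ := le_csSup hbdd₂ hmem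
  have hsym1 : u ⬝ᵥ (Sblock n p A B C T).mulVec u
      = 2 * (u ⬝ᵥ (Mblock n p A B C T).mulVec u) := by
    simp only [Sblock]
    exact quad_symmetrize _ u
  have hsym2 : v ⬝ᵥ S₂.mulVec v
      = 2 * (v ⬝ᵥ (Mblock n p A B C (T - H - 1)).mulVec v) := by
    simp only [hS₂, Sblock]
    exact quad_symmetrize _ v
  have hcast : ((T - (T - H - 1) : ℕ) : ℝ) = (H : ℝ) + 1 := by
    have : T - (T - H - 1) = H + 1 := by omega
    rw [this]
    push_cast
    ring
  have hfinal : 2 * (((H:ℝ) + 1) * ((p:ℝ) * (κ ^ 2 * (1 + φ * ρ / (1 - ρ)))))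
      ≤ 2 * p * κ ^ 2 * (α * H + β) := by
    rw [hα, hβ]
    have hGG' : φ * ρ / (1 - ρ) ≤ φ * ρ / (1 - ρ) ^ 2 := by
      apply div_le_div_of_nonneg_left (by positivity) (by positivity)
      nlinarith
    have ht0 : (0:ℝ) ≤ (p:ℝ) * κ ^ 2 := by positivity
    nlinarith [mul_nonneg ht0 (sub_nonneg.mpr hGG')]
  calc u ⬝ᵥ (Sblock n p A B C T).mulVec u
      = 2 * (u ⬝ᵥ (Mblock n p A B C T).mulVec u) := hsym1
    _ ≤ 2 * ((v ⬝ᵥ (Mblock n p A B C (T - H - 1)).mulVec v)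
          + ((T - (T - H - 1) : ℕ) : ℝ) * ((p:ℝ) * (κ ^ 2 * (1 + φ * ρ / (1 - ρ))))) := by
        linarith [hcore]
    _ = v ⬝ᵥ S₂.mulVec v
          + 2 * (((H:ℝ) + 1) * ((p:ℝ) * (κ ^ 2 * (1 + φ * ρ / (1 - ρ))))) := by
        rw [hsym2, hcast]
        ring
    _ ≤ 2 * p * κ ^ 2 * (α * H + β) + sSup set₂ := by
        have := add_le_add hle2 hfinal
        linarith
end

section
/- Let U ∈ ℝ^{d×d} be symmetric positive definite and λ > 0. Then for every x ∈ ℝ^d, ‖U^{−1/2} x‖₂ ≤ √(1 + λ/λ_min(U)) · ‖(λ I_d + U)^{−1/2} x‖₂, where M^{−1/2} denotes the inverse of the unique positive definite square root of a positive definite matrix M. -/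
open Matrix

/-- Smallest eigenvalue of a symmetric real matrix, as the infimum of the quadratic form over
the Euclidean unit sphere. -/
noncomputable def lamMin {ι : Type} [Fintype ι] (M : Matrix ι ι ℝ) : ℝ :=
  sInf {x : ℝ | ∃ v : ι → ℝ, (∑ i, (v i) ^ 2) = 1 ∧ x = v ⬝ᵥ M.mulVec v}

/-- Euclidean norm of a finitely indexed real vector. -/
noncomputable def euclNorm {ι : Type} [Fintype ι] (v : ι → ℝ) : ℝ :=
  Real.sqrt (∑ i, (v i) ^ 2)

lemma dot_mulVec_left {d : ℕ} (A : Matrix (Fin d) (Fin d) ℝ) (a b : Fin d → ℝ) :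
    (A *ᵥ a) ⬝ᵥ b = a ⬝ᵥ (Aᵀ *ᵥ b) := by
  rw [Matrix.dotProduct_mulVec, Matrix.vecMul_transpose]

lemma quad_nonneg {d : ℕ} {U : Matrix (Fin d) (Fin d) ℝ} (hU : U.PosSemidef)
    (v : Fin d → ℝ) : 0 ≤ v ⬝ᵥ U *ᵥ v := by
  simpa using hU.dotProduct_mulVec_nonneg v

lemma lamMin_mul_le {d : ℕ} {U : Matrix (Fin d) (Fin d) ℝ} (hU : U.PosDef)
    (w : Fin d → ℝ) : lamMin U * (w ⬝ᵥ w) ≤ w ⬝ᵥ U *ᵥ w := by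
  by_cases hw : w = 0
  · simp [hw]
  · have hn2 : 0 < w ⬝ᵥ w := by
      obtain ⟨i, hi⟩ := Function.ne_iff.mp hw
      rw [dotProduct]
      exact Finset.sum_pos' (fun j _ => mul_self_nonneg _)
        ⟨i, Finset.mem_univ i, mul_self_pos.mpr hi⟩
    set t : ℝ := Real.sqrt (w ⬝ᵥ w) with ht
    have htpos : 0 < t := Real.sqrt_pos.mpr hn2
    set v : Fin d → ℝ := t⁻¹ • w with hv
    have hvsum : (∑ i, (v i) ^ 2) = 1 := by
      simp only [hv, Pi.smul_apply, smul_eq_mul, mul_pow]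
      rw [← Finset.mul_sum]
      have hsum : (∑ i, (w i) ^ 2) = w ⬝ᵥ w := by simp [dotProduct, sq]
      rw [hsum, ht, ← Real.sqrt_inv, Real.sq_sqrt (by positivity),
        inv_mul_cancel₀ hn2.ne']
    have hle : lamMin U ≤ v ⬝ᵥ U *ᵥ v := by
      apply csInf_le
      · exact ⟨0, fun y ⟨v', _, hy⟩ => hy ▸ quad_nonneg hU.posSemidef v'⟩
      · exact ⟨v, hvsum, rfl⟩
    have hquad : v ⬝ᵥ U *ᵥ v = t⁻¹ * t⁻¹ * (w ⬝ᵥ U *ᵥ w) := by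
      rw [hv, Matrix.mulVec_smul, smul_dotProduct, dotProduct_smul,
        smul_eq_mul, smul_eq_mul]
      ring
    have ht2 : t * t = w ⬝ᵥ w := Real.mul_self_sqrt hn2.le
    have := mul_le_mul_of_nonneg_right hle hn2.le
    calc lamMin U * (w ⬝ᵥ w) ≤ (v ⬝ᵥ U *ᵥ v) * (w ⬝ᵥ w) := this
      _ = w ⬝ᵥ U *ᵥ w := by
          rw [hquad, ← ht2]
          field_simp

lemma lamMin_pos {d : ℕ} (hd : 0 < d) {U : Matrix (Fin d) (Fin d) ℝ} (hU : U.PosDef) :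
    0 < lamMin U := by
  classical
  set f : (Fin d → ℝ) → ℝ := fun v => v ⬝ᵥ U *ᵥ v with hf
  set K : Set (Fin d → ℝ) := {v | ∑ i, (v i) ^ 2 = 1} with hK
  have hclosed : IsClosed K := isClosed_eq (by fun_prop) continuous_const
  have hsub : K ⊆ Metric.closedBall 0 1 := by
    intro v hv
    simp only [Metric.mem_closedBall, dist_zero_right]
    rw [pi_norm_le_iff_of_nonneg zero_le_one]
    intro i
    have h1 : (v i) ^ 2 ≤ 1 := by
      rw [← hv]
      exact Finset.single_le_sum (fun j _ => sq_nonneg (v j)) (Finset.mem_univ i)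
    rw [Real.norm_eq_abs, ← Real.sqrt_sq_eq_abs]
    calc Real.sqrt ((v i)^2) ≤ Real.sqrt 1 := Real.sqrt_le_sqrt h1
      _ = 1 := Real.sqrt_one
  have hKc : IsCompact K := (isCompact_closedBall 0 1).of_isClosed_subset hclosed hsub
  have hfc : Continuous f := by
    simp only [hf, dotProduct, Matrix.mulVec]
    fun_prop
  have hKne : K.Nonempty := by
    refine ⟨Pi.single ⟨0, hd⟩ 1, ?_⟩
    simp [hK, Pi.single_apply, sq]
  have hset : {x : ℝ | ∃ v : Fin d → ℝ, (∑ i, (v i) ^ 2) = 1 ∧ x = v ⬝ᵥ U.mulVec v}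
      = f '' K := by
    ext y
    constructor
    · rintro ⟨v, h1, h2⟩; exact ⟨v, h1, h2.symm⟩
    · rintro ⟨v, h1, h2⟩; exact ⟨v, h1, h2.symm⟩
  rw [lamMin, hset]
  obtain ⟨v, hvK, hveq⟩ := (hKc.image hfc).sInf_mem (hKne.image f)
  rw [← hveq]
  have hvne : v ≠ 0 := by
    intro h
    rw [hK] at hvK
    simp only [Set.mem_setOf_eq, h] at hvK
    simp at hvK
  simpa using hU.dotProduct_mulVec_pos hvne

/-- for symmetric positive definite `U` and `λ > 0`, with `R` the (unique) positive
definite square root of `U` and `S` that of `λI + U`, every `x ∈ ℝ^d` satisfies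
`‖U^{-1/2} x‖₂ ≤ √(1 + λ/λ_min(U)) · ‖(λI + U)^{-1/2} x‖₂`. -/
theorem stmt8 (d : ℕ) (U : Matrix (Fin d) (Fin d) ℝ) (hU : U.PosDef)
    (lam : ℝ) (hlam : 0 < lam)
    (R S : Matrix (Fin d) (Fin d) ℝ)
    (hR : R.PosDef) (hRsq : R * R = U)
    (hS : S.PosDef) (hSsq : S * S = lam • (1 : Matrix (Fin d) (Fin d) ℝ) + U)
    (x : Fin d → ℝ) :
    euclNorm (R⁻¹.mulVec x) ≤ Real.sqrt (1 + lam / lamMin U) * euclNorm (S⁻¹.mulVec x) := by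
  classical
  have hRdet : IsUnit R.det := hR.det_pos.ne'.isUnit
  have hSdet : IsUnit S.det := hS.det_pos.ne'.isUnit
  have hRT : Rᵀ = R := by
    rw [← Matrix.conjTranspose_eq_transpose_of_trivial]; exact hR.1
  have hST : Sᵀ = S := by
    rw [← Matrix.conjTranspose_eq_transpose_of_trivial]; exact hS.1
  have hRinvT : R⁻¹ᵀ = R⁻¹ := by rw [Matrix.transpose_nonsing_inv, hRT]
  have hRR : R * R⁻¹ = 1 := Matrix.mul_nonsing_inv R hRdet
  have hSS : S * S⁻¹ = 1 := Matrix.mul_nonsing_inv S hSdet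
  set u : Fin d → ℝ := R⁻¹ *ᵥ x with hu
  set v : Fin d → ℝ := S⁻¹ *ᵥ x with hv
  set w : Fin d → ℝ := R⁻¹ *ᵥ u with hw
  -- U *ᵥ w = x
  have hUw : U *ᵥ w = x := by
    rw [hw, hu, Matrix.mulVec_mulVec, Matrix.mulVec_mulVec]
    have : U * R⁻¹ * R⁻¹ = 1 := by
      rw [← hRsq, Matrix.mul_assoc R R R⁻¹, hRR, Matrix.mul_one, hRR]
    rw [this, Matrix.one_mulVec]
  -- u ⬝ᵥ u = w ⬝ᵥ x
  have key0 : u ⬝ᵥ u = w ⬝ᵥ x := by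
    rw [hw, dot_mulVec_left, hRinvT]
    exact dotProduct_comm _ _
  -- u ⬝ᵥ u = w ⬝ᵥ U *ᵥ w
  have key1 : u ⬝ᵥ u = w ⬝ᵥ U *ᵥ w := by rw [hUw, key0]
  -- u ⬝ᵥ u = (S *ᵥ w) ⬝ᵥ v
  have key2 : (S *ᵥ w) ⬝ᵥ v = u ⬝ᵥ u := by
    rw [dot_mulVec_left, hST, hv, Matrix.mulVec_mulVec, hSS, Matrix.one_mulVec, key0]
  -- (S *ᵥ w) ⬝ᵥ (S *ᵥ w) = lam * (w ⬝ᵥ w) + w ⬝ᵥ U *ᵥ w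
  have key3 : (S *ᵥ w) ⬝ᵥ (S *ᵥ w) = lam * (w ⬝ᵥ w) + w ⬝ᵥ U *ᵥ w := by
    rw [dot_mulVec_left, hST, Matrix.mulVec_mulVec, hSsq, Matrix.add_mulVec,
      Matrix.smul_mulVec, Matrix.one_mulVec, dotProduct_add,
      dotProduct_smul, smul_eq_mul]
  have hsum_u : (∑ i, (u i) ^ 2) = u ⬝ᵥ u := by simp [dotProduct, sq]
  have hsum_v : (∑ i, (v i) ^ 2) = v ⬝ᵥ v := by simp [dotProduct, sq]
  have hvv : 0 ≤ v ⬝ᵥ v := by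
    rw [← hsum_v]
    exact Finset.sum_nonneg fun i _ => sq_nonneg _
  by_cases hp : u ⬝ᵥ u = 0
  · rw [euclNorm, hsum_u, hp, Real.sqrt_zero]
    simp only [euclNorm]
    exact mul_nonneg (Real.sqrt_nonneg _) (Real.sqrt_nonneg _)
  · have hune : u ≠ 0 := by intro h; rw [h] at hp; simp at hp
    have hd : 0 < d := by
      obtain ⟨i, _⟩ := Function.ne_iff.mp hune
      exact i.pos
    have hm : 0 < lamMin U := lamMin_pos hd hU
    have hppos : 0 < u ⬝ᵥ u := by
      rcases lt_or_eq_of_le (by rw [← hsum_u]; exact Finset.sum_nonneg fun i _ => sq_nonneg _ : (0:ℝ) ≤ u ⬝ᵥ u) with h | h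
      · exact h
      · exact absurd h.symm hp
    set c : ℝ := 1 + lam / lamMin U with hc
    have hcpos : 0 < c := by positivity
    -- lam * (w ⬝ᵥ w) ≤ (lam / lamMin U) * (w ⬝ᵥ U *ᵥ w)
    have hlm : lamMin U * (w ⬝ᵥ w) ≤ w ⬝ᵥ U *ᵥ w := lamMin_mul_le hU w
    have hstep : lam * (w ⬝ᵥ w) ≤ lam / lamMin U * (w ⬝ᵥ U *ᵥ w) := by
      rw [div_mul_eq_mul_div, le_div_iff₀ hm]
      nlinarith
    have hSw : (S *ᵥ w) ⬝ᵥ (S *ᵥ w) ≤ c * (u ⬝ᵥ u) := by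
      rw [key3, key1, hc]
      nlinarith
    -- Cauchy–Schwarz
    have hcs : ((S *ᵥ w) ⬝ᵥ v) ^ 2 ≤ ((S *ᵥ w) ⬝ᵥ (S *ᵥ w)) * (v ⬝ᵥ v) := by
      have := Finset.sum_mul_sq_le_sq_mul_sq Finset.univ (S *ᵥ w) v
      simpa [dotProduct, sq] using this
    have hmain : u ⬝ᵥ u ≤ c * (v ⬝ᵥ v) := by
      rw [key2] at hcs
      nlinarith [mul_le_mul_of_nonneg_right hSw hvv]
    rw [euclNorm, euclNorm, hsum_u, hsum_v, ← Real.sqrt_mul hcpos.le]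
    exact Real.sqrt_le_sqrt hmain
end

section
/- Let α ∈ (0,1) be such that for all t ∈ [−1,1] both 1 − arccos(t)/π ≥ α(1+t)/2 and arccos(t)/π ≥ α(1−t)/2 hold. Let W ∈ ℝ^{n×n} and let v_1, …, v_n ∈ ℝ^d be unit vectors. Then ∑_{i=1}^n ∑_{j=1}^n W_{ij} ( 1 − (2/π) arccos(v_i^⊤ v_j) ) ≥ α ∑_{i=1}^n ∑_{j=1}^n W_{ij} v_i^⊤ v_j − (1−α) ∑_{i=1}^n ∑_{j=1}^n |W_{ij}|. (Here the left-hand side equals the expected value produced by Goemans–Williamson random hyperplane rounding and the first sum on the right equals the optimal value tr(W V^⊤ V) of the semidefinite relaxation, where V has columns v_i.) -/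
open Matrix

/-- if `α ∈ (0,1)` satisfies the two Goemans–Williamson inequalities on `[-1,1]`,
then for any `W ∈ ℝ^{n×n}` and unit vectors `v_1,…,v_n ∈ ℝ^d`,
`∑_{i,j} W_{ij}(1 − (2/π)arccos(v_iᵀv_j)) ≥ α ∑_{i,j} W_{ij} v_iᵀv_j − (1−α) ∑_{i,j} |W_{ij}|`. -/
theorem stmt16 (α : ℝ) (hα0 : 0 < α) (hα1 : α < 1)
    (hα : ∀ t ∈ Set.Icc (-1 : ℝ) 1,
      1 - Real.arccos t / Real.pi ≥ α * (1 + t) / 2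
      ∧ Real.arccos t / Real.pi ≥ α * (1 - t) / 2)
    (n d : ℕ) (W : Matrix (Fin n) (Fin n) ℝ)
    (v : Fin n → Fin d → ℝ) (hv : ∀ i, euclNorm (v i) = 1) :
    ∑ i, ∑ j, W i j * (1 - (2 / Real.pi) * Real.arccos (v i ⬝ᵥ v j))
      ≥ α * ∑ i, ∑ j, W i j * (v i ⬝ᵥ v j) - (1 - α) * ∑ i, ∑ j, |W i j| := by
  have key : ∀ i j : Fin n,
      α * (W i j * (v i ⬝ᵥ v j)) - (1 - α) * |W i j|
        ≤ W i j * (1 - (2 / Real.pi) * Real.arccos (v i ⬝ᵥ v j)) := by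
    intro i j
    set t := v i ⬝ᵥ v j with htdef
    have ht : t ∈ Set.Icc (-1 : ℝ) 1 := by
      have hcs := Finset.sum_mul_sq_le_sq_mul_sq Finset.univ (v i) (v j)
      have hvi : (∑ k, (v i k) ^ 2) = 1 := by
        have := hv i; rw [euclNorm, Real.sqrt_eq_one] at this; exact this
      have hvj : (∑ k, (v j k) ^ 2) = 1 := by
        have := hv j; rw [euclNorm, Real.sqrt_eq_one] at this; exact this
      rw [hvi, hvj] at hcs
      have ht2 : t ^ 2 ≤ 1 := by
        simpa [htdef, dotProduct] using hcs
      constructor <;> nlinarith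
    obtain ⟨h1, h2⟩ := hα t ht
    have hrw : (2 / Real.pi) * Real.arccos t = 2 * (Real.arccos t / Real.pi) := by
      ring
    rw [hrw]
    set a := Real.arccos t / Real.pi with hadef
    have hf1 : α * t - (1 - α) ≤ 1 - 2 * a := by linarith
    have hf2 : 1 - 2 * a ≤ α * t + (1 - α) := by linarith
    rcases abs_cases (W i j) with ⟨hab, hs⟩ | ⟨hab, hs⟩ <;> nlinarith
  have hsum : ∑ i, ∑ j, (α * (W i j * (v i ⬝ᵥ v j)) - (1 - α) * |W i j|)
      ≤ ∑ i, ∑ j, W i j * (1 - (2 / Real.pi) * Real.arccos (v i ⬝ᵥ v j)) :=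
    Finset.sum_le_sum fun i _ => Finset.sum_le_sum fun j _ => key i j
  calc α * ∑ i, ∑ j, W i j * (v i ⬝ᵥ v j) - (1 - α) * ∑ i, ∑ j, |W i j|
      = ∑ i, ∑ j, (α * (W i j * (v i ⬝ᵥ v j)) - (1 - α) * |W i j|) := by
        simp [Finset.mul_sum, Finset.sum_sub_distrib]
    _ ≤ _ := hsum
end

section
/- For every t ∈ [−1,1], the following two inequalities hold with α = 0.878: (i) 1 − arccos(t)/π ≥ α · (1+t)/2, and (ii) arccos(t)/π ≥ α · (1−t)/2. (The optimal such constant is min over t ∈ (−1,1) of (arccos(t)/π) / ((1−t)/2) ≈ 0.87856, the Goemans–Williamson constant.) -/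
open Real Set

private lemma gw_nonneg_of_deriv (f f' : ℝ → ℝ) (hd : ∀ x, HasDerivAt f (f' x) x)
    (h0 : f 0 = 0) (hf' : ∀ x, 0 ≤ x → 0 ≤ f' x) {x : ℝ} (hx : 0 ≤ x) : 0 ≤ f x := by
  have hmono : MonotoneOn f (Ici 0) := by
    apply monotoneOn_of_deriv_nonneg (convex_Ici 0)
    · exact (continuous_iff_continuousAt.2 fun y => (hd y).continuousAt).continuousOn
    · intro y hy
      exact ((hd y).differentiableAt).differentiableWithinAt
    · intro y hy
      rw [interior_Ici] at hy
      rw [(hd y).deriv]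
      exact hf' y hy.le
  have := hmono (mem_Ici.2 le_rfl) (mem_Ici.2 hx) hx
  rwa [h0] at this

private lemma gw_sin_lb (x : ℝ) (hx : 0 ≤ x) : x - x ^ 3 / 6 ≤ Real.sin x := by
  have h := gw_nonneg_of_deriv (fun y => Real.sin y - (y - y ^ 3 / 6))
      (fun y => Real.cos y - (1 - y ^ 2 / 2))
      (fun y => by
        have h1 := (Real.hasDerivAt_sin y).sub
          ((hasDerivAt_id y).sub ((hasDerivAt_pow 3 y).div_const 6))
        refine h1.congr_deriv ?_
        norm_num
        ring)
      (by norm_num)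
      (fun y hy => by have := Real.one_sub_sq_div_two_le_cos (x := y); linarith) hx
  linarith

private lemma gw_cos_ub4 (x : ℝ) (hx : 0 ≤ x) : Real.cos x ≤ 1 - x ^ 2 / 2 + x ^ 4 / 24 := by
  have h := gw_nonneg_of_deriv (fun y => (1 - y ^ 2 / 2 + y ^ 4 / 24) - Real.cos y)
      (fun y => Real.sin y - (y - y ^ 3 / 6))
      (fun y => by
        have h1 := ((((hasDerivAt_const y (1:ℝ)).sub ((hasDerivAt_pow 2 y).div_const 2)).add
          ((hasDerivAt_pow 4 y).div_const 24)).sub (Real.hasDerivAt_cos y))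
        refine h1.congr_deriv ?_
        norm_num
        ring)
      (by norm_num)
      (fun y hy => by have := gw_sin_lb y hy; linarith) hx
  linarith

private lemma gw_sin_ub5 (x : ℝ) (hx : 0 ≤ x) :
    Real.sin x ≤ x - x ^ 3 / 6 + x ^ 5 / 120 := by
  have h := gw_nonneg_of_deriv (fun y => (y - y ^ 3 / 6 + y ^ 5 / 120) - Real.sin y)
      (fun y => (1 - y ^ 2 / 2 + y ^ 4 / 24) - Real.cos y)
      (fun y => by
        have h1 := ((((hasDerivAt_id y).sub ((hasDerivAt_pow 3 y).div_const 6)).add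
          ((hasDerivAt_pow 5 y).div_const 120)).sub (Real.hasDerivAt_sin y))
        refine h1.congr_deriv ?_
        norm_num
        ring)
      (by norm_num)
      (fun y hy => by have := gw_cos_ub4 y hy; linarith) hx
  linarith

private lemma gw_cos_lb6 (x : ℝ) (hx : 0 ≤ x) :
    1 - x ^ 2 / 2 + x ^ 4 / 24 - x ^ 6 / 720 ≤ Real.cos x := by
  have h := gw_nonneg_of_deriv
      (fun y => Real.cos y - (1 - y ^ 2 / 2 + y ^ 4 / 24 - y ^ 6 / 720))
      (fun y => (y - y ^ 3 / 6 + y ^ 5 / 120) - Real.sin y)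
      (fun y => by
        have h1 := (Real.hasDerivAt_cos y).sub
          ((((hasDerivAt_const y (1:ℝ)).sub ((hasDerivAt_pow 2 y).div_const 2)).add
            ((hasDerivAt_pow 4 y).div_const 24)).sub ((hasDerivAt_pow 6 y).div_const 720))
        refine h1.congr_deriv ?_
        norm_num
        ring)
      (by norm_num)
      (fun y hy => by have := gw_sin_ub5 y hy; linarith) hx
  linarith

private lemma gw_sin_lb7 (x : ℝ) (hx : 0 ≤ x) :
    x - x ^ 3 / 6 + x ^ 5 / 120 - x ^ 7 / 5040 ≤ Real.sin x := by
  have h := gw_nonneg_of_deriv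
      (fun y => Real.sin y - (y - y ^ 3 / 6 + y ^ 5 / 120 - y ^ 7 / 5040))
      (fun y => Real.cos y - (1 - y ^ 2 / 2 + y ^ 4 / 24 - y ^ 6 / 720))
      (fun y => by
        have h1 := (Real.hasDerivAt_sin y).sub
          ((((hasDerivAt_id y).sub ((hasDerivAt_pow 3 y).div_const 6)).add
            ((hasDerivAt_pow 5 y).div_const 120)).sub ((hasDerivAt_pow 7 y).div_const 5040))
        refine h1.congr_deriv ?_
        norm_num
        ring)
      (by norm_num)
      (fun y hy => by have := gw_cos_lb6 y hy; linarith) hx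
  linarith

private lemma gw_cos_ub8 (x : ℝ) (hx : 0 ≤ x) :
    Real.cos x ≤ 1 - x ^ 2 / 2 + x ^ 4 / 24 - x ^ 6 / 720 + x ^ 8 / 40320 := by
  have h := gw_nonneg_of_deriv
      (fun y => (1 - y ^ 2 / 2 + y ^ 4 / 24 - y ^ 6 / 720 + y ^ 8 / 40320) - Real.cos y)
      (fun y => Real.sin y - (y - y ^ 3 / 6 + y ^ 5 / 120 - y ^ 7 / 5040))
      (fun y => by
        have h1 := ((((((hasDerivAt_const y (1:ℝ)).sub ((hasDerivAt_pow 2 y).div_const 2)).add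
          ((hasDerivAt_pow 4 y).div_const 24)).sub ((hasDerivAt_pow 6 y).div_const 720)).add
          ((hasDerivAt_pow 8 y).div_const 40320)).sub (Real.hasDerivAt_cos y))
        refine h1.congr_deriv ?_
        norm_num
        ring)
      (by norm_num)
      (fun y hy => by have := gw_sin_lb7 y hy; linarith) hx
  linarith

/-- Rational lower bound for `cos a` when `1.58 ≤ a ≤ 3.14`. -/
private lemma gw_cos_anchor_lb (a r : ℝ) (ha1 : 1.58 ≤ a) (ha2 : a ≤ 3.14)
    (hr : 1 - (3.141592 - a) ^ 2 / 2 + (3.141592 - a) ^ 4 / 24 - (3.141592 - a) ^ 6 / 720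
        + (3.141592 - a) ^ 8 / 40320 ≤ r) : -r ≤ Real.cos a := by
  have hπl : (3.141592 : ℝ) < π := Real.pi_gt_d6
  have h1 : Real.cos (π - a) = -Real.cos a := Real.cos_pi_sub a
  have h2 : Real.cos (π - a) ≤ Real.cos (3.141592 - a) := by
    apply Real.cos_le_cos_of_nonneg_of_le_pi (by linarith) (by linarith [Real.pi_pos]) (by linarith)
  have h3 : Real.cos (3.141592 - a) ≤ r :=
    le_trans (gw_cos_ub8 (3.141592 - a) (by linarith)) hr
  linarith

/-- Rational upper bound for `sin a` when `1.58 ≤ a ≤ 3.14`. -/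
private lemma gw_sin_anchor_ub (a s : ℝ) (ha1 : 1.58 ≤ a) (ha2 : a ≤ 3.14)
    (hs : (3.141593 - a) - (3.141593 - a) ^ 3 / 6 + (3.141593 - a) ^ 5 / 120 ≤ s) :
    Real.sin a ≤ s := by
  have hπl : (3.141592 : ℝ) < π := Real.pi_gt_d6
  have hπu : π < 3.141593 := Real.pi_lt_d6
  have h1 : Real.sin (π - a) = Real.sin a := Real.sin_pi_sub a
  have h2 : Real.sin (π - a) ≤ Real.sin (3.141593 - a) := by
    apply Real.sin_le_sin_of_le_of_le_pi_div_two (by linarith [Real.pi_pos]) (by linarith) (by linarith)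
  have h3 : Real.sin (3.141593 - a) ≤ s :=
    le_trans (gw_sin_ub5 (3.141593 - a) (by linarith)) hs
  linarith

/-- Tangent-line lower bound for cosine from an anchor in `[π/2, π]`. -/
private lemma gw_tangent (a ca sa θ : ℝ) (haπ2 : π / 2 ≤ a) (haπ : a ≤ π)
    (hca : ca ≤ Real.cos a) (hsa : Real.sin a ≤ sa) (hθ : a ≤ θ) :
    ca - sa * (θ - a) ≤ Real.cos θ := by
  have hδ : 0 ≤ θ - a := by linarith
  have hcosa : Real.cos a ≤ 0 :=
    Real.cos_nonpos_of_pi_div_two_le_of_le haπ2 (by linarith [Real.pi_pos])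
  have hsina : 0 ≤ Real.sin a :=
    Real.sin_nonneg_of_nonneg_of_le_pi (by linarith [Real.pi_div_two_pos]) haπ
  have hexp : Real.cos θ
      = Real.cos a * Real.cos (θ - a) - Real.sin a * Real.sin (θ - a) := by
    have h2 := Real.cos_add a (θ - a)
    rw [show a + (θ - a) = θ by ring] at h2
    exact h2
  have h1 : Real.cos a ≤ Real.cos a * Real.cos (θ - a) := by
    nlinarith [Real.cos_le_one (θ - a)]
  have h2 : Real.sin a * Real.sin (θ - a) ≤ sa * (θ - a) :=
    le_trans (mul_le_mul_of_nonneg_left (Real.sin_le hδ) hsina)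
      (mul_le_mul_of_nonneg_right hsa hδ)
  nlinarith

set_option maxHeartbeats 1600000 in
/-- Core inequality: for `θ ∈ [0, π]`, `0.878 · π · (1 - cos θ) ≤ 2θ`. -/
private lemma gw_core (θ : ℝ) (hθ0 : 0 ≤ θ) (hθπ : θ ≤ π) :
    (0.878 : ℝ) * π * (1 - Real.cos θ) ≤ 2 * θ := by
  have hπl : (3.141592 : ℝ) < π := Real.pi_gt_d6
  have hπu : π < 3.141593 := Real.pi_lt_d6
  have hπ0 : (0:ℝ) < π := Real.pi_pos
  -- helper to go from a linear lower bound on cos θ to the goal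
  have key : ∀ c : ℝ, c ≤ Real.cos θ →
      (0.878 : ℝ) * 3.141593 * (1 - c) ≤ 2 * θ →
      (0.878 : ℝ) * π * (1 - Real.cos θ) ≤ 2 * θ := by
    intro c hc hlin
    have h1 : 1 - Real.cos θ ≤ 1 - c := by linarith
    have h2 : 0 ≤ 1 - Real.cos θ := by linarith [Real.cos_le_one θ]
    have h3 : (0.878 : ℝ) * π * (1 - Real.cos θ) ≤ (0.878 : ℝ) * 3.141593 * (1 - c) := by
      apply mul_le_mul (by nlinarith) h1 h2 (by norm_num)
    linarith
  rcases le_or_gt θ 1.41 with h1 | h1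
  · -- quadratic regime
    have hc := Real.one_sub_sq_div_two_le_cos (x := θ)
    apply key (1 - θ ^ 2 / 2) hc ?_
    nlinarith [mul_nonneg hθ0 (show (0:ℝ) ≤ 2 - 0.878 * 3.141593 / 2 * θ by nlinarith)]
  rcases le_or_gt θ (π / 2) with h2 | h2
  · -- cos θ ≥ 0
    have hc : (0:ℝ) ≤ Real.cos θ := Real.cos_nonneg_of_mem_Icc ⟨by linarith, h2⟩
    apply key 0 hc (by nlinarith)
  rcases le_or_gt θ 2.07 with h3 | h3
  · -- tangent at π/2 : cos θ ≥ π/2 - θ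
    have hδ : 0 ≤ θ - π / 2 := by linarith
    have hc : π / 2 - θ ≤ Real.cos θ := by
      have hs := Real.sin_le hδ
      have := Real.sin_sub_pi_div_two θ
      linarith
    have hc' : 1.570796 - θ ≤ Real.cos θ := by linarith
    apply key (1.570796 - θ) hc' (by linarith)
  rcases le_or_gt θ 2.21 with h4 | h4
  · have hca := gw_cos_anchor_lb 2.07 0.478728 (by norm_num) (by norm_num) (by norm_num)
    have hsa := gw_sin_anchor_ub 2.07 0.878282 (by norm_num) (by norm_num) (by norm_num)
    have hc := gw_tangent 2.07 (-0.478728) 0.878282 θ (by linarith) (by linarith) hca hsa (by linarith)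
    apply key (-0.478728 - 0.878282 * (θ - 2.07)) (by linarith) (by linarith)
  rcases le_or_gt θ 2.28 with h5 | h5
  · have hca := gw_cos_anchor_lb 2.21 0.596558 (by norm_num) (by norm_num) (by norm_num)
    have hsa := gw_sin_anchor_ub 2.21 0.802691 (by norm_num) (by norm_num) (by norm_num)
    have hc := gw_tangent 2.21 (-0.596558) 0.802691 θ (by linarith) (by linarith) hca hsa (by linarith)
    apply key (-0.596558 - 0.802691 * (θ - 2.21)) (by linarith) (by linarith)
  rcases le_or_gt θ 2.33 with h6 | h6
  · have hca := gw_cos_anchor_lb 2.28 0.651231 (by norm_num) (by norm_num) (by norm_num)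
    have hsa := gw_sin_anchor_ub 2.28 0.758951 (by norm_num) (by norm_num) (by norm_num)
    have hc := gw_tangent 2.28 (-0.651231) 0.758951 θ (by linarith) (by linarith) hca hsa (by linarith)
    apply key (-0.651231 - 0.758951 * (θ - 2.28)) (by linarith) (by linarith)
  rcases le_or_gt θ 2.7 with h7 | h7
  · have hca := gw_cos_anchor_lb 2.33 0.688345 (by norm_num) (by norm_num) (by norm_num)
    have hsa := gw_sin_anchor_ub 2.33 0.725431 (by norm_num) (by norm_num) (by norm_num)
    have hc := gw_tangent 2.33 (-0.688345) 0.725431 θ (by linarith) (by linarith) hca hsa (by linarith)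
    apply key (-0.688345 - 0.725431 * (θ - 2.33)) (by linarith) (by linarith)
  · have hca := gw_cos_anchor_lb 2.7 0.904073 (by norm_num) (by norm_num) (by norm_num)
    have hsa := gw_sin_anchor_ub 2.7 0.427381 (by norm_num) (by norm_num) (by norm_num)
    have hc := gw_tangent 2.7 (-0.904073) 0.427381 θ (by linarith) (by linarith) hca hsa (by linarith)
    apply key (-0.904073 - 0.427381 * (θ - 2.7)) (by linarith) (by linarith)

/-- for every `t ∈ [-1,1]`, with `α = 0.878`,
`1 − arccos(t)/π ≥ α (1+t)/2` and `arccos(t)/π ≥ α (1−t)/2`. -/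
theorem stmt17 :
    ∀ t ∈ Set.Icc (-1 : ℝ) 1,
      1 - Real.arccos t / Real.pi ≥ (0.878 : ℝ) * (1 + t) / 2
      ∧ Real.arccos t / Real.pi ≥ (0.878 : ℝ) * (1 - t) / 2 := by
  intro t ht
  obtain ⟨ht1, ht2⟩ := ht
  have hπ0 : (0:ℝ) < π := Real.pi_pos
  have hθ0 : 0 ≤ Real.arccos t := Real.arccos_nonneg t
  have hθπ : Real.arccos t ≤ π := Real.arccos_le_pi t
  have hcos : Real.cos (Real.arccos t) = t := Real.cos_arccos ht1 ht2
  constructor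
  · have h := gw_core (π - Real.arccos t) (by linarith) (by linarith)
    rw [Real.cos_pi_sub, hcos] at h
    rw [ge_iff_le, ← sub_nonneg]
    have hd : 1 - Real.arccos t / π - 0.878 * (1 + t) / 2
        = (2 * (π - Real.arccos t) - 0.878 * π * (1 - -t)) / (2 * π) := by
      field_simp
      ring
    rw [hd]
    apply div_nonneg (by linarith) (by positivity)
  · have h := gw_core (Real.arccos t) hθ0 hθπ
    rw [hcos] at h
    rw [ge_iff_le, ← sub_nonneg]
    have hd : Real.arccos t / π - 0.878 * (1 - t) / 2
        = (2 * Real.arccos t - 0.878 * π * (1 - t)) / (2 * π) := by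
      field_simp
    rw [hd]
    apply div_nonneg (by linarith) (by positivity)
end
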